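/- Let M_1 and M_2 be two finite MDPs sharing state space, action space, reward r bounded by r_max, and discount γ ∈ [0,1), but with transition kernels P_1, P_2 satisfying ||P_1(·|s,a) - P_2(·|s,a)||_1 ≤ δ for all (s,a). Then for any policy π, |J_{M_1}(π) - J_{M_2}(π)| ≤ γ r_max δ/(1-γ)². -/

import Mathlib

open Finset

/-- State distribution at time `t` induced by policy `pol` in the MDP with kernel `P`,
starting from initial distribution `init`. -/
noncomputable def visit {S A : Type*} [Fintype S] [Fintype A]
    (P : S → A → S → ℝ) (pol : S → A → ℝ) (init : S → ℝ) : ℕ → S → ℝ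
  | 0 => init
  | (t + 1) => fun s' => ∑ s, ∑ a, visit P pol init t s * pol s a * P s a s'

/-- Discounted return of policy `pol` from initial distribution `init`. -/
noncomputable def ret {S A : Type*} [Fintype S] [Fintype A]
    (P : S → A → S → ℝ) (pol : S → A → ℝ) (init : S → ℝ) (r : S → A → ℝ) (γ : ℝ) : ℝ :=
  ∑' t : ℕ, γ ^ t * ∑ s, visit P pol init t s * ∑ a, pol s a * r s a

section aux
variable {S A : Type*} [Fintype S] [Fintype A]

lemma visit_nonneg (P : S → A → S → ℝ) (pol : S → A → ℝ) (init : S → ℝ)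
    (hP : ∀ s a s', 0 ≤ P s a s') (hpol : ∀ s a, 0 ≤ pol s a)
    (hinit : ∀ s, 0 ≤ init s) : ∀ t s, 0 ≤ visit P pol init t s
  | 0, s => hinit s
  | (t+1), s' => Finset.sum_nonneg fun s _ => Finset.sum_nonneg fun a _ =>
      mul_nonneg (mul_nonneg (visit_nonneg P pol init hP hpol hinit t s) (hpol s a)) (hP s a s')

lemma visit_sum (P : S → A → S → ℝ) (pol : S → A → ℝ) (init : S → ℝ)
    (hP_sum : ∀ s a, ∑ s', P s a s' = 1) (hpol_sum : ∀ s, ∑ a, pol s a = 1)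
    (hinit_sum : ∑ s, init s = 1) : ∀ t, ∑ s, visit P pol init t s = 1
  | 0 => hinit_sum
  | (t+1) => by
      have ih := visit_sum P pol init hP_sum hpol_sum hinit_sum t
      show ∑ s', ∑ s, ∑ a, visit P pol init t s * pol s a * P s a s' = 1
      rw [Finset.sum_comm]
      calc ∑ s, ∑ s', ∑ a, visit P pol init t s * pol s a * P s a s'
          = ∑ s, ∑ a, ∑ s', visit P pol init t s * pol s a * P s a s' := by
            exact Finset.sum_congr rfl fun s _ => Finset.sum_comm 
        _ = ∑ s, ∑ a, visit P pol init t s * pol s a := by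
            refine Finset.sum_congr rfl fun s _ => Finset.sum_congr rfl fun a _ => ?_
            rw [← Finset.mul_sum, hP_sum, mul_one]
        _ = ∑ s, visit P pol init t s := by
            refine Finset.sum_congr rfl fun s _ => ?_
            rw [← Finset.mul_sum, hpol_sum, mul_one]
        _ = 1 := ih

end aux

/-- return difference bound under an ℓ1 dynamics perturbation. -/
theorem return_gap_dynamics_perturbation
    {S A : Type*} [Fintype S] [Fintype A] [Nonempty S] [Nonempty A]
    (P1 P2 : S → A → S → ℝ) (pol : S → A → ℝ) (init : S → ℝ) (r : S → A → ℝ)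
    (γ δ rmax : ℝ) (hγ0 : 0 ≤ γ) (hγ1 : γ < 1) (hδ : 0 ≤ δ) (hrmax : 0 ≤ rmax)
    (hP1_nonneg : ∀ s a s', 0 ≤ P1 s a s') (hP1_sum : ∀ s a, ∑ s', P1 s a s' = 1)
    (hP2_nonneg : ∀ s a s', 0 ≤ P2 s a s') (hP2_sum : ∀ s a, ∑ s', P2 s a s' = 1)
    (hpol_nonneg : ∀ s a, 0 ≤ pol s a) (hpol_sum : ∀ s, ∑ a, pol s a = 1)
    (hinit_nonneg : ∀ s, 0 ≤ init s) (hinit_sum : ∑ s, init s = 1)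
    (hr : ∀ s a, |r s a| ≤ rmax)
    (hdyn : ∀ s a, ∑ s', |P1 s a s' - P2 s a s'| ≤ δ) :
    |ret P1 pol init r γ - ret P2 pol init r γ| ≤ γ * rmax * δ / (1 - γ) ^ 2 := by
  set v1 := visit P1 pol init with hv1
  set v2 := visit P2 pol init with hv2
  have hv1n := visit_nonneg P1 pol init hP1_nonneg hpol_nonneg hinit_nonneg
  have hv2n := visit_nonneg P2 pol init hP2_nonneg hpol_nonneg hinit_nonneg
  have hv1s := visit_sum P1 pol init hP1_sum hpol_sum hinit_sum
  have hv2s := visit_sum P2 pol init hP2_sum hpol_sum hinit_sum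
  set R : S → ℝ := fun s => ∑ a, pol s a * r s a with hR
  have hRb : ∀ s, |R s| ≤ rmax := by
    intro s
    calc |R s| ≤ ∑ a, |pol s a * r s a| := Finset.abs_sum_le_sum_abs _ _
      _ ≤ ∑ a, pol s a * rmax := by
          refine Finset.sum_le_sum fun a _ => ?_
          rw [abs_mul, abs_of_nonneg (hpol_nonneg s a)]
          exact mul_le_mul_of_nonneg_left (hr s a) (hpol_nonneg s a)
      _ = rmax := by rw [← Finset.sum_mul, hpol_sum, one_mul]
  -- L1 distance bound on visit distributions
  have hD : ∀ t, ∑ s, |v1 t s - v2 t s| ≤ t * δ := by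
    intro t
    induction t with
    | zero => simp [hv1, hv2, visit]
    | succ t ih =>
      have key : ∀ s', |v1 (t+1) s' - v2 (t+1) s'| ≤
          ∑ s, ∑ a, (|v1 t s - v2 t s| * pol s a * P1 s a s'
            + v2 t s * pol s a * |P1 s a s' - P2 s a s'|) := by
        intro s'
        have hsplit : v1 (t+1) s' - v2 (t+1) s'
            = ∑ s, ∑ a, ((v1 t s - v2 t s) * pol s a * P1 s a s'
              + v2 t s * pol s a * (P1 s a s' - P2 s a s')) := by
          show (∑ s, ∑ a, v1 t s * pol s a * P1 s a s')
              - (∑ s, ∑ a, v2 t s * pol s a * P2 s a s') = _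
          rw [← Finset.sum_sub_distrib]
          refine Finset.sum_congr rfl fun s _ => ?_
          rw [← Finset.sum_sub_distrib]
          exact Finset.sum_congr rfl fun a _ => by ring
        rw [hsplit]
        refine le_trans (Finset.abs_sum_le_sum_abs _ _) ?_
        refine Finset.sum_le_sum fun s _ => ?_
        refine le_trans (Finset.abs_sum_le_sum_abs _ _) ?_
        refine Finset.sum_le_sum fun a _ => ?_
        refine le_trans (abs_add_le _ _) ?_
        gcongr ?_ + ?_
        · rw [abs_mul, abs_mul, abs_of_nonneg (hpol_nonneg s a),
            abs_of_nonneg (hP1_nonneg s a s')]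
        · rw [abs_mul, abs_mul, abs_of_nonneg (hv2n t s),
            abs_of_nonneg (hpol_nonneg s a)]
      calc ∑ s', |v1 (t+1) s' - v2 (t+1) s'|
          ≤ ∑ s', ∑ s, ∑ a, (|v1 t s - v2 t s| * pol s a * P1 s a s'
            + v2 t s * pol s a * |P1 s a s' - P2 s a s'|) :=
            Finset.sum_le_sum fun s' _ => key s'
        _ = ∑ s, ∑ a, ∑ s', (|v1 t s - v2 t s| * pol s a * P1 s a s'
            + v2 t s * pol s a * |P1 s a s' - P2 s a s'|) := by
            rw [Finset.sum_comm]
            exact Finset.sum_congr rfl fun s _ => Finset.sum_comm 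
        _ = ∑ s, ∑ a, (|v1 t s - v2 t s| * pol s a * (∑ s', P1 s a s')
            + v2 t s * pol s a * (∑ s', |P1 s a s' - P2 s a s'|)) := by
            refine Finset.sum_congr rfl fun s _ => Finset.sum_congr rfl fun a _ => ?_
            rw [Finset.sum_add_distrib, Finset.mul_sum, Finset.mul_sum]
        _ ≤ ∑ s, ∑ a, (|v1 t s - v2 t s| * pol s a * 1
            + v2 t s * pol s a * δ) := by
            refine Finset.sum_le_sum fun s _ => Finset.sum_le_sum fun a _ => ?_
            gcongr
            · exact mul_nonneg (abs_nonneg _) (hpol_nonneg s a)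
            · exact le_of_eq (hP1_sum s a)
            · exact mul_nonneg (hv2n t s) (hpol_nonneg s a)
            · exact hdyn s a
        _ = (∑ s, |v1 t s - v2 t s|) + δ := by
            have h1 : ∀ s, ∑ a, |v1 t s - v2 t s| * pol s a * 1 = |v1 t s - v2 t s| := by
              intro s
              simp only [mul_one]
              rw [← Finset.mul_sum, hpol_sum, mul_one]
            have h2 : ∀ s, ∑ a, v2 t s * pol s a * δ = v2 t s * δ := by
              intro s
              rw [← Finset.sum_mul, ← Finset.mul_sum, hpol_sum, mul_one]
            have hv2s' : ∑ s, v2 t s = 1 := by rw [hv2]; exact hv2s t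
            calc ∑ s, ∑ a, (|v1 t s - v2 t s| * pol s a * 1 + v2 t s * pol s a * δ)
                = ∑ s, (|v1 t s - v2 t s| + v2 t s * δ) := by
                  refine Finset.sum_congr rfl fun s _ => ?_
                  rw [Finset.sum_add_distrib, h1, h2]
              _ = (∑ s, |v1 t s - v2 t s|) + (∑ s, v2 t s) * δ := by
                  rw [Finset.sum_add_distrib, Finset.sum_mul]
              _ = (∑ s, |v1 t s - v2 t s|) + δ := by rw [hv2s', one_mul]
        _ ≤ t * δ + δ := by gcongr
        _ = (t + 1 : ℕ) * δ := by push_cast; ring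
  -- per-step integrand bounds
  have hterm1 : ∀ (v : ℕ → S → ℝ) (hvn : ∀ t s, 0 ≤ v t s) (hvs : ∀ t, ∑ s, v t s = 1) (t : ℕ),
      |γ ^ t * ∑ s, v t s * R s| ≤ γ ^ t * rmax := by
    intro v hvn hvs t
    rw [abs_mul, abs_of_nonneg (pow_nonneg hγ0 t)]
    refine mul_le_mul_of_nonneg_left ?_ (pow_nonneg hγ0 t)
    calc |∑ s, v t s * R s| ≤ ∑ s, |v t s * R s| := Finset.abs_sum_le_sum_abs _ _
      _ ≤ ∑ s, v t s * rmax := by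
          refine Finset.sum_le_sum fun s _ => ?_
          rw [abs_mul, abs_of_nonneg (hvn t s)]
          exact mul_le_mul_of_nonneg_left (hRb s) (hvn t s)
      _ = rmax := by rw [← Finset.sum_mul, hvs, one_mul]
  have hsum1 : Summable (fun t : ℕ => γ ^ t * ∑ s, v1 t s * R s) := by
    refine Summable.of_norm_bounded ((summable_geometric_of_lt_one hγ0 hγ1).mul_right rmax) ?_
    intro t
    rw [Real.norm_eq_abs]
    exact hterm1 v1 hv1n hv1s t
  have hsum2 : Summable (fun t : ℕ => γ ^ t * ∑ s, v2 t s * R s) := by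
    refine Summable.of_norm_bounded ((summable_geometric_of_lt_one hγ0 hγ1).mul_right rmax) ?_
    intro t
    rw [Real.norm_eq_abs]
    exact hterm1 v2 hv2n hv2s t
  have hdiff : ∀ t : ℕ, |γ ^ t * ∑ s, v1 t s * R s - γ ^ t * ∑ s, v2 t s * R s|
      ≤ γ ^ t * (t * δ * rmax) := by
    intro t
    rw [← mul_sub, abs_mul, abs_of_nonneg (pow_nonneg hγ0 t), ← Finset.sum_sub_distrib]
    refine mul_le_mul_of_nonneg_left ?_ (pow_nonneg hγ0 t)
    calc |∑ s, (v1 t s * R s - v2 t s * R s)|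
        ≤ ∑ s, |v1 t s - v2 t s| * rmax := by
          refine le_trans (Finset.abs_sum_le_sum_abs _ _) (Finset.sum_le_sum fun s _ => ?_)
          rw [← sub_mul, abs_mul]
          exact mul_le_mul_of_nonneg_left (hRb s) (abs_nonneg _)
      _ = (∑ s, |v1 t s - v2 t s|) * rmax := (Finset.sum_mul _ _ _).symm
      _ ≤ t * δ * rmax := mul_le_mul_of_nonneg_right (hD t) hrmax
  have hgeo : Summable (fun t : ℕ => γ ^ t * ((t : ℝ) * δ * rmax)) := by
    have : Summable (fun t : ℕ => (t : ℝ) * γ ^ t) := by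
      have := summable_pow_mul_geometric_of_norm_lt_one 1 (r := γ)
        (by rwa [Real.norm_eq_abs, abs_of_nonneg hγ0])
      simpa using this
    simpa [mul_comm, mul_left_comm, mul_assoc] using this.mul_right (δ * rmax)
  have hsubsum : Summable (fun t : ℕ => γ ^ t * ∑ s, v1 t s * R s - γ ^ t * ∑ s, v2 t s * R s) :=
    hsum1.sub hsum2
  have hretdef : ret P1 pol init r γ - ret P2 pol init r γ
      = ∑' t : ℕ, (γ ^ t * ∑ s, v1 t s * R s - γ ^ t * ∑ s, v2 t s * R s) := by
    rw [ret, ret]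
    simp only [← hv1, ← hv2, ← hR]
    exact (Summable.tsum_sub hsum1 hsum2).symm
  rw [hretdef]
  calc |∑' t : ℕ, (γ ^ t * ∑ s, v1 t s * R s - γ ^ t * ∑ s, v2 t s * R s)|
      ≤ ∑' t : ℕ, |γ ^ t * ∑ s, v1 t s * R s - γ ^ t * ∑ s, v2 t s * R s| := by
        have h := norm_tsum_le_tsum_norm (f := fun t : ℕ =>
          γ ^ t * ∑ s, v1 t s * R s - γ ^ t * ∑ s, v2 t s * R s)
          (by simpa only [Real.norm_eq_abs] using hsubsum.abs)
        simpa only [Real.norm_eq_abs] using h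
    _ ≤ ∑' t : ℕ, γ ^ t * ((t : ℝ) * δ * rmax) := Summable.tsum_le_tsum hdiff hsubsum.abs hgeo
    _ = (δ * rmax) * ∑' t : ℕ, (t : ℝ) * γ ^ t := by
        rw [← tsum_mul_left]
        exact tsum_congr fun t => by ring
    _ = (δ * rmax) * (γ / (1 - γ) ^ 2) := by
        rw [tsum_coe_mul_geometric_of_norm_lt_one
          (by rwa [Real.norm_eq_abs, abs_of_nonneg hγ0])]
    _ = γ * rmax * δ / (1 - γ) ^ 2 := by ring
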